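/- Let m, a, t be nonnegative integers with t <= a <= m. Then sum_{s=0}^{a} (-1)^s * q^{C(s,2)} * [m choose s]_q * [a - s choose t]_q = q^{m*(a-t)} * [a - m choose a - t]_q, where the Gaussian binomial [a - m choose a - t]_q has possibly negative upper argument. -/

import Mathlib

/-- Gaussian binomial coefficient with (possibly negative) integer upper
argument: `[n choose i]_q = ∏_{j=0}^{i-1} (q^{n-j} - 1)/(q^{i-j} - 1)`. -/
def gauss (q : ℚ) (n : ℤ) (i : ℕ) : ℚ :=
  ∏ j ∈ Finset.range i, (q ^ (n - (j : ℤ)) - 1) / (q ^ ((i : ℤ) - (j : ℤ)) - 1)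

section Aux
variable {q : ℚ} (hq : 1 < q)
include hq

lemma my_q0 : (0:ℚ) < q := lt_trans one_pos hq

lemma my_qne : q ≠ 0 := ne_of_gt (my_q0 hq)

lemma my_zpow_ne_one {n : ℤ} (hn : n ≠ 0) : q ^ n ≠ 1 := by
  rcases lt_or_gt_of_ne hn with h | h
  · exact ne_of_lt (zpow_lt_one_of_neg₀ hq h)
  · exact ne_of_gt (one_lt_zpow₀ hq h)

lemma my_sub_ne {z : ℤ} (h : 0 < z) : q ^ z - 1 ≠ 0 :=
  sub_ne_zero.mpr (my_zpow_ne_one hq (ne_of_gt h))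

omit hq

lemma gauss_eq (n : ℤ) (i : ℕ) :
    gauss q n i = (∏ j ∈ Finset.range i, (q ^ (n - (j:ℤ)) - 1)) /
      (∏ j ∈ Finset.range i, (q ^ ((j:ℤ) + 1) - 1)) := by
  rw [gauss, Finset.prod_div_distrib]
  congr 1
  rw [← Finset.prod_range_reflect (fun j => (q ^ ((j:ℤ) + 1) - 1)) i]
  apply Finset.prod_congr rfl
  intro j hj
  simp only [Finset.mem_range] at hj
  congr 2
  omega

include hq

lemma my_denom_ne (i : ℕ) : (∏ j ∈ Finset.range i, (q ^ ((j:ℤ) + 1) - 1)) ≠ 0 := by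
  apply Finset.prod_ne_zero_iff.mpr
  intro j hj
  exact my_sub_ne hq (by omega)

lemma gauss_R1 (n : ℤ) (k : ℕ) :
    gauss q n (k+1) = (q ^ n - 1) / (q ^ ((k:ℤ)+1) - 1) * gauss q (n-1) k := by
  rw [gauss_eq, gauss_eq, Finset.prod_range_succ']
  have h1 : ∀ j : ℕ, q ^ (n - ((j:ℤ)+1)) - 1 = q ^ ((n-1) - (j:ℤ)) - 1 := by
    intro j; congr 2; ring
  simp only [Nat.cast_add, Nat.cast_one, h1, Nat.cast_zero, sub_zero]
  rw [Finset.prod_range_succ]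
  have d1 := my_denom_ne hq k
  have d2 := my_sub_ne hq (show (0:ℤ) < (k:ℤ)+1 by omega)
  field_simp

lemma gauss_R3 (n : ℤ) (k : ℕ) :
    gauss q n (k+1) = (q ^ (n - (k:ℤ)) - 1) / (q ^ ((k:ℤ)+1) - 1) * gauss q n k := by
  rw [gauss_eq, gauss_eq, Finset.prod_range_succ, Finset.prod_range_succ]
  have d1 := my_denom_ne hq k
  have d2 := my_sub_ne hq (show (0:ℤ) < (k:ℤ)+1 by omega)
  field_simp

lemma gauss_R1' (n : ℤ) (k : ℕ) :
    (q ^ ((k:ℤ)+1) - 1) * gauss q n (k+1) = (q ^ n - 1) * gauss q (n-1) k := by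
  rw [gauss_R1 hq n k]
  have hc : q ^ ((k:ℤ)+1) - 1 ≠ 0 := my_sub_ne hq (by omega)
  field_simp

lemma gauss_R3' (n : ℤ) (k : ℕ) :
    (q ^ ((k:ℤ)+1) - 1) * gauss q n (k+1) = (q ^ (n - (k:ℤ)) - 1) * gauss q n k := by
  rw [gauss_R3 hq n k]
  have hc : q ^ ((k:ℤ)+1) - 1 ≠ 0 := my_sub_ne hq (by omega)
  field_simp

omit hq

lemma gauss_zero' (n : ℤ) : gauss q n 0 = 1 := by simp [gauss]

lemma gauss_eq_zero {n : ℤ} (h0 : 0 ≤ n) {k : ℕ} (h : n < k) : gauss q n k = 0 := by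
  apply Finset.prod_eq_zero (Finset.mem_range.mpr (show n.toNat < k by omega))
  have : n - (n.toNat : ℤ) = 0 := by omega
  rw [this]
  simp

include hq

lemma gauss_P1 (n : ℤ) (k : ℕ) :
    gauss q n (k+1) = gauss q (n-1) (k+1) + q ^ (n - ((k:ℤ)+1)) * gauss q (n-1) k := by
  rw [gauss_R1 hq n k, gauss_R3 hq (n-1) k]
  have h2 : q ^ (n - 1 - (k:ℤ)) = q ^ (n - ((k:ℤ)+1)) := by congr 1; ring
  have hqn : q ^ n = q ^ (n - ((k:ℤ)+1)) * q ^ ((k:ℤ)+1) := by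
    rw [← zpow_add₀ (my_qne hq)]; congr 1; ring
  have d2 := my_sub_ne hq (show (0:ℤ) < (k:ℤ)+1 by omega)
  rw [h2, hqn]
  field_simp
  ring

lemma gauss_P2 (n : ℤ) (k : ℕ) :
    gauss q n (k+1) = q ^ ((k:ℤ)+1) * gauss q (n-1) (k+1) + gauss q (n-1) k := by
  rw [gauss_R1 hq n k, gauss_R3 hq (n-1) k]
  have h2 : q ^ (n - 1 - (k:ℤ)) = q ^ (n - ((k:ℤ)+1)) := by congr 1; ring
  have hqn : q ^ n = q ^ (n - ((k:ℤ)+1)) * q ^ ((k:ℤ)+1) := by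
    rw [← zpow_add₀ (my_qne hq)]; congr 1; ring
  have d2 := my_sub_ne hq (show (0:ℤ) < (k:ℤ)+1 by omega)
  rw [h2, hqn]
  field_simp
  ring

lemma gauss_diag (n : ℕ) : gauss q (n : ℤ) n = 1 := by
  induction n with
  | zero => simp [gauss]
  | succ n ih =>
    have : ((n+1 : ℕ) : ℤ) = (n : ℤ) + 1 := by push_cast; ring
    rw [this, gauss_R1 hq]
    have h1 : (n : ℤ) + 1 - 1 = (n : ℤ) := by ring
    rw [h1, ih, div_self (my_sub_ne hq (by omega)), one_mul]

lemma neg_one_rec (t : ℕ) :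
    q ^ ((t:ℤ)+1) * gauss q (-1) (t+1) + gauss q (-1) t = 0 := by
  have h := gauss_P2 hq 0 t
  have h0 : gauss q 0 (t+1) = 0 := gauss_eq_zero le_rfl (by omega)
  rw [h0] at h
  norm_num at h
  linarith [h]

lemma gauss_refl (k : ℕ) : ∀ n : ℤ,
    q ^ ((k.choose 2 : ℕ) : ℤ) * gauss q n k
      = (-1:ℚ)^k * q ^ (n * k) * gauss q ((k:ℤ) - 1 - n) k := by
  induction k with
  | zero => intro n; simp [gauss]
  | succ k ih =>
    intro n
    have hN : (((k:ℕ)+1:ℕ):ℤ) - 1 - n = (k:ℤ) - n := by push_cast; ring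
    rw [hN]
    have hc : q ^ ((k:ℤ)+1) - 1 ≠ 0 := my_sub_ne hq (by omega)
    have hA := gauss_R1' hq n k
    have hC := gauss_R3' hq ((k:ℤ) - n) k
    rw [show (k:ℤ) - n - (k:ℤ) = -n by ring] at hC
    have hB := ih (n-1)
    rw [show (k:ℤ) - 1 - (n-1) = (k:ℤ) - n by ring] at hB
    have hB2 : q ^ (k:ℤ) * (q ^ ((k.choose 2 : ℕ) : ℤ) * gauss q (n-1) k)
        = (-1:ℚ)^k * q ^ (n * (k:ℤ)) * gauss q ((k:ℤ) - n) k := by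
      rw [hB, show ∀ x y z : ℚ, x * (y * z) = (x * y) * z from fun _ _ _ => (mul_assoc _ _ _).symm]
      rw [show q ^ (k:ℤ) * ((-1:ℚ)^k * q ^ ((n-1) * (k:ℤ)))
            = (-1:ℚ)^k * (q ^ (k:ℤ) * q ^ ((n-1) * (k:ℤ))) by ring,
          ← zpow_add₀ (my_qne hq), show (k:ℤ) + (n-1)*(k:ℤ) = n * (k:ℤ) by ring]
    have hYn : q ^ n * q ^ (-n) = 1 := by
      rw [← zpow_add₀ (my_qne hq)]; simp
    have e1 : (((k+1).choose 2 : ℕ) : ℤ) = ((k.choose 2 : ℕ) : ℤ) + (k:ℤ) := by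
      rw [Nat.choose_succ_succ]
      push_cast [Nat.choose_one_right]
      ring
    have e2 : n * (((k:ℕ)+1:ℕ):ℤ) = n * (k:ℤ) + n := by push_cast; ring
    rw [e1, e2, zpow_add₀ (my_qne hq), zpow_add₀ (my_qne hq)]
    apply mul_left_cancel₀ hc
    linear_combination (q ^ ((k.choose 2 : ℕ) : ℤ) * q ^ (k:ℤ)) * hA
      - ((-1:ℚ)^(k+1) * q ^ (n * (k:ℤ)) * q ^ n) * hC
      + (q ^ n - 1) * hB2
      + ((-1:ℚ)^k * q ^ (n * (k:ℤ)) * gauss q ((k:ℤ) - n) k) * hYn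

lemma gauss_H (m : ℤ) (a : ℕ) :
    ∑ s ∈ Finset.range (a+1), (-1:ℚ)^s * q^(s.choose 2) * gauss q m s
      = (-1:ℚ)^a * q^((a+1).choose 2) * gauss q (m-1) a := by
  induction a with
  | zero => simp [gauss_zero']
  | succ a ih =>
    rw [Finset.sum_range_succ, ih]
    have hP2 := gauss_P2 hq m a
    have hz : q ^ ((a:ℤ)+1) = q ^ (a+1 : ℕ) := by
      norm_cast
    rw [hz] at hP2
    have e1 : (a+2).choose 2 = (a+1).choose 2 + (a+1) := by
      simp [Nat.choose_succ_succ, Nat.choose_one_right]; omega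
    rw [hP2, e1, pow_add]
    ring

omit hq in
lemma nat_sq (a : ℕ) : (a+1).choose 2 + a.choose 2 = a * a := by
  induction a with
  | zero => simp
  | succ a ih =>
    simp [Nat.choose_succ_succ, Nat.choose_one_right] at *
    nlinarith [ih]

lemma case_t0 (m a : ℕ) :
    ∑ s ∈ Finset.range (a+1),
        (-1:ℚ)^s * q^(s.choose 2) * gauss q (m:ℤ) s * gauss q ((a:ℤ)-(s:ℤ)) 0
      = q^(m*a) * gauss q ((a:ℤ)-(m:ℤ)) a := by
  simp only [gauss_zero', mul_one]
  rw [gauss_H hq]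
  have hrefl := gauss_refl hq a ((a:ℤ)-(m:ℤ))
  rw [show (a:ℤ) - 1 - ((a:ℤ)-(m:ℤ)) = (m:ℤ) - 1 by ring] at hrefl
  have hE : q^((a+1).choose 2) * q^((a.choose 2 : ℕ):ℤ) = q^(m*a) * q^(((a:ℤ)-(m:ℤ))*(a:ℤ)) := by
    rw [← zpow_natCast q ((a+1).choose 2), ← zpow_natCast q (m*a),
        ← zpow_add₀ (my_qne hq), ← zpow_add₀ (my_qne hq)]
    congr 1
    have h : (((a+1).choose 2 : ℕ) : ℤ) + ((a.choose 2 : ℕ) : ℤ) = (a:ℤ) * (a:ℤ) := by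
      exact_mod_cast nat_sq a
    push_cast
    linear_combination h
  have hPa : q ^ ((a.choose 2 : ℕ):ℤ) ≠ 0 := zpow_ne_zero _ (my_qne hq)
  apply mul_left_cancel₀ hPa
  linear_combination (-(q:ℚ)^(m*a)) * hrefl + ((-1:ℚ)^a * gauss q ((m:ℤ)-1) a) * hE

lemma main_aux (a : ℕ) : ∀ m t : ℕ, t ≤ a → a ≤ m →
    ∑ s ∈ Finset.range (a + 1),
        (-1 : ℚ) ^ s * q ^ (s.choose 2) * gauss q (m : ℤ) s *
          gauss q ((a : ℤ) - (s : ℤ)) t =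
      q ^ (m * (a - t)) * gauss q ((a : ℤ) - (m : ℤ)) (a - t) := by
  induction a with
  | zero =>
    intro m t ht hm
    interval_cases t
    simpa using case_t0 hq m 0
  | succ b ih =>
    intro m t ht hm
    rcases Nat.eq_zero_or_pos t with rfl | htpos
    · simpa using case_t0 hq m (b+1)
    rcases eq_or_lt_of_le ht with rfl | htlt
    · -- diagonal t = b + 1
      rw [Nat.sub_self]
      simp only [mul_zero, pow_zero, gauss_zero', mul_one, one_mul]
      rw [Finset.sum_eq_single 0]
      · simp only [pow_zero, Nat.choose_zero_right, gauss_zero', one_mul, mul_one,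
          Nat.cast_zero, sub_zero, Nat.choose_succ_self_right]
        rw [show (Nat.choose 0 2) = 0 from rfl, pow_zero, one_mul]
        exact gauss_diag hq (b+1)
      · intro s hs hs0
        rw [gauss_eq_zero (show (0:ℤ) ≤ ((b+1:ℕ):ℤ) - (s:ℤ) by
              simp only [Finset.mem_range] at hs; omega)
            (show ((b+1:ℕ):ℤ) - (s:ℤ) < ((b+1 : ℕ) : ℤ) by
              have : s ≠ 0 := hs0; omega), mul_zero]
      · intro h
        simp at h
    · -- 1 ≤ t ≤ b : recurrence
      obtain ⟨t', rfl⟩ : ∃ t', t = t' + 1 := ⟨t - 1, by omega⟩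
      have htb : t' + 1 ≤ b := by omega
      have hbm : b ≤ m := by omega
      have hsum : ∀ s : ℕ, gauss q (((b+1:ℕ):ℤ) - (s:ℤ)) (t'+1)
          = q^((t':ℤ)+1) * gauss q ((b:ℤ)-(s:ℤ)) (t'+1) + gauss q ((b:ℤ)-(s:ℤ)) t' := by
        intro s
        have h := gauss_P2 hq (((b+1:ℕ):ℤ) - (s:ℤ)) t'
        rw [show (((b+1:ℕ):ℤ) - (s:ℤ)) - 1 = (b:ℤ) - (s:ℤ) by push_cast; ring] at h
        exact h
      calc
        ∑ s ∈ Finset.range (b+1+1),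
            (-1 : ℚ) ^ s * q ^ (s.choose 2) * gauss q (m : ℤ) s *
              gauss q (((b+1:ℕ) : ℤ) - (s : ℤ)) (t'+1)
            = ∑ s ∈ Finset.range (b+1+1),
              (q^((t':ℤ)+1) * ((-1 : ℚ) ^ s * q ^ (s.choose 2) * gauss q (m : ℤ) s *
                gauss q ((b:ℤ)-(s:ℤ)) (t'+1)) +
               (-1 : ℚ) ^ s * q ^ (s.choose 2) * gauss q (m : ℤ) s *
                gauss q ((b:ℤ)-(s:ℤ)) t') := by
              apply Finset.sum_congr rfl
              intro s hs
              rw [hsum s]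
              ring
        _ = q^((t':ℤ)+1) * (∑ s ∈ Finset.range (b+1),
              (-1 : ℚ) ^ s * q ^ (s.choose 2) * gauss q (m : ℤ) s *
                gauss q ((b:ℤ)-(s:ℤ)) (t'+1)) +
            (∑ s ∈ Finset.range (b+1),
              (-1 : ℚ) ^ s * q ^ (s.choose 2) * gauss q (m : ℤ) s *
                gauss q ((b:ℤ)-(s:ℤ)) t') := by
              rw [Finset.sum_add_distrib, Finset.sum_range_succ _ (b+1),
                  Finset.sum_range_succ _ (b+1), ← Finset.mul_sum]
              rw [show (b:ℤ) - ((b+1:ℕ):ℤ) = -1 by push_cast; ring]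
              have hz := neg_one_rec hq t'
              linear_combination ((-1:ℚ)^(b+1) * q^((b+1).choose 2) * gauss q (m:ℤ) (b+1)) * hz
        _ = q ^ (m * (b + 1 - (t' + 1))) * gauss q (((b+1:ℕ) : ℤ) - (m : ℤ)) (b + 1 - (t' + 1)) := by
              rw [ih m (t'+1) htb hbm, ih m t' (by omega) hbm]
              have hk : b - t' = (b - (t'+1)) + 1 := by omega
              set k0 := b - (t'+1) with hk0
              rw [show b + 1 - (t'+1) = b - t' from by omega, hk]
              have hP1 := gauss_P1 hq (((b+1:ℕ):ℤ) - (m:ℤ)) k0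
              rw [show (((b+1:ℕ):ℤ) - (m:ℤ)) - 1 = (b:ℤ) - (m:ℤ) by push_cast; ring,
                  show ((b+1:ℕ):ℤ) - (m:ℤ) - ((k0:ℤ)+1) = ((t':ℤ)+1) - (m:ℤ) by
                    have : (k0:ℤ) = (b:ℤ) - (t':ℤ) - 1 := by omega
                    push_cast
                    omega] at hP1
              rw [hP1]
              have hX : q^(m*(k0+1)) * q^(((t':ℤ)+1) - (m:ℤ)) = q^((t':ℤ)+1) * q^(m*k0) := by
                rw [← zpow_natCast q (m*(k0+1)), ← zpow_natCast q (m*k0),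
                    ← zpow_add₀ (my_qne hq), ← zpow_add₀ (my_qne hq)]
                congr 1
                push_cast
                ring
              linear_combination (-(gauss q ((b:ℤ)-(m:ℤ)) k0)) * hX

end Aux

theorem gauss_alt_sum_prod (q : ℚ) (hq : 1 < q) (m a t : ℕ)
    (hta : t ≤ a) (ham : a ≤ m) :
    ∑ s ∈ Finset.range (a + 1),
        (-1 : ℚ) ^ s * q ^ (s.choose 2) * gauss q (m : ℤ) s *
          gauss q ((a : ℤ) - (s : ℤ)) t =
      q ^ (m * (a - t)) * gauss q ((a : ℤ) - (m : ℤ)) (a - t) := by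
  exact main_aux hq a m t hta ham
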